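/- Every simplicial complex is the auxiliary complex of a simplicial complex satisfying property I: let T be a simplicial complex on vertex set {1,…,n} with minimal nonfaces α_1, …, α_r, and let S be the simplicial complex on vertex set {1,…,n+1} whose minimal nonfaces are σ_i = α_i ∪ {n+1}. Then S satisfies property I with witnesses α_1, …, α_r, its auxiliary complex T(S) equals T, and χ_c(S)(t) = t^{n+1} · Σ_{F ∈ T} t^{−|F|} (1 − t^{−1})^{n−|F|} in ℤ[t,t⁻¹]. -/

import Mathlib

open Finset LaurentPolynomial

noncomputable section

/-- The union `σ_I = ⋃_{i ∈ I} σ_i`. -/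
def unionOver {ι V : Type*} [DecidableEq V] (σ : ι → Finset V) (I : Finset ι) : Finset V :=
  I.sup σ

/-- The intersection graph `G_I` on the vertex set `I`. -/
def interGraph {ι V : Type*} [DecidableEq V] (σ : ι → Finset V) (I : Finset ι) :
    SimpleGraph {i // i ∈ I} where
  Adj i j := i ≠ j ∧ (σ i.1 ∩ σ j.1).Nonempty
  symm := by
    constructor
    intro i j h
    exact ⟨h.1.symm, by rw [Finset.inter_comm]; exact h.2⟩
  loopless := by constructor; intro i h; exact h.1 rfl

/-- `c(I)`, the number of connected components of `G_I`. -/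
def compCount {ι V : Type*} [DecidableEq V] (σ : ι → Finset V) (I : Finset ι) : ℕ :=
  Nat.card (interGraph σ I).ConnectedComponent

/-- Property I. -/
def PropertyI {ι V W : Type*} [DecidableEq V] [DecidableEq W]
    (σ : ι → Finset V) (α : ι → Finset W) : Prop :=
  (∀ i, (α i).card + 1 = (σ i).card) ∧
  ∀ I : Finset ι, I.Nonempty → ∀ p ∉ I,
    (unionOver σ I ∩ σ p = ∅ → unionOver α I ∩ α p = ∅) ∧
    ((unionOver σ I ∩ σ p).Nonempty →
      (unionOver α I ∩ α p).card + 1 = (unionOver σ I ∩ σ p).card)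

/-- The simplicial chromatic polynomial. -/
def simpChrom {ι : Type*} [Fintype ι] [DecidableEq ι] {n : ℕ} (σ : ι → Finset (Fin n)) :
    LaurentPolynomial ℤ :=
  T (n : ℤ) +
  ∑ I ∈ (univ : Finset ι).powerset.filter (fun I => I.Nonempty),
    (-1) ^ I.card *
      T ((n : ℤ) - ((unionOver σ I).card : ℤ) + (compCount σ I : ℤ))

/-- Faces of the complex whose minimal nonfaces are the `α i`. -/
def facesOf {ι : Type*} [Fintype ι] {N : ℕ} (α : ι → Finset (Fin N)) :
    Finset (Finset (Fin N)) :=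
  (univ : Finset (Finset (Fin N))).filter (fun F => ∀ i, ¬ α i ⊆ F)

/-- Coefficient of `t^k` in a Laurent polynomial. -/
def lcoeff (p : LaurentPolynomial ℤ) (k : ℤ) : ℤ := p.coeff k

end

/-!
Every `σ_i = α_i ∪ {n+1}` contains the apex `n+1`, so all the `σ_I ∩ σ_p` are nonempty, property I
reduces to `|σ_I ∩ σ_p| = |α_I ∩ α_p| + 1`, and for `I ≠ ∅` we get `c(I) = 1` and
`|σ_I| = |α_I| + 1`; hence `χ_c(S)(t) = t^{n+1} Σ_I (-1)^{|I|} t^{-|α_I|}`. On the other side,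
inclusion–exclusion over the minimal nonfaces turns a sum over the faces of `T` into
`Σ_I (-1)^{|I|} Σ_{F ⊇ α_I}`, and by the binomial theorem
`Σ_{F ⊇ A} t^{-|F|} (1 - t^{-1})^{n-|F|} = t^{-|A|} (t^{-1} + (1 - t^{-1}))^{n-|A|} = t^{-|A|}`.
-/

section unionOver

variable {ι V W : Type*} [DecidableEq V]

theorem unionOver_empty (s : ι → Finset V) : unionOver s ∅ = ∅ := sup_empty

theorem unionOver_subset_iff (s : ι → Finset V) (I : Finset ι) (F : Finset V) :
    unionOver s I ⊆ F ↔ ∀ i ∈ I, s i ⊆ F :=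
  Finset.sup_le_iff

theorem unionOver_insert (a : V) (s : ι → Finset V) {I : Finset ι} (hI : I.Nonempty) :
    unionOver (fun i => insert a (s i)) I = insert a (unionOver s I) := by
  ext x
  obtain ⟨i₀, hi₀⟩ := hI
  simp only [unionOver, mem_sup, mem_insert]
  exact ⟨fun ⟨i, hi, hx⟩ => hx.imp id fun hx => ⟨i, hi, hx⟩,
    fun h => h.elim (fun hx => ⟨i₀, hi₀, Or.inl hx⟩) fun ⟨i, hi, hx⟩ => ⟨i, hi, Or.inr hx⟩⟩

theorem unionOver_image [DecidableEq W] (f : V → W) (s : ι → Finset V) (I : Finset ι) :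
    unionOver (fun i => (s i).image f) I = (unionOver s I).image f := by
  simp only [unionOver, sup_eq_biUnion, biUnion_image]

end unionOver

theorem compCount_eq_one {ι V : Type*} [DecidableEq V] (σ : ι → Finset V) {I : Finset ι}
    (hI : I.Nonempty) (hσ : ∀ i ∈ I, ∀ j ∈ I, (σ i ∩ σ j).Nonempty) :
    compCount σ I = 1 := by
  obtain ⟨i₀, hi₀⟩ := hI
  have : (interGraph σ I).Connected :=
    { preconnected := fun u v => by
        by_cases h : u = v
        · exact h ▸ SimpleGraph.Reachable.refl u
        · exact SimpleGraph.Adj.reachable ⟨h, hσ u.1 u.2 v.1 v.2⟩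
      nonempty := ⟨⟨i₀, hi₀⟩⟩ }
  rw [compCount, Nat.card_eq_one_iff_unique]
  exact ⟨this.preconnected.subsingleton_connectedComponent,
    ⟨SimpleGraph.connectedComponentMk _ ⟨i₀, hi₀⟩⟩⟩

theorem sum_powerset_eq_add_sum_nonempty {α M : Type*} [AddCommMonoid M] (s : Finset α)
    (f : Finset α → M) :
    ∑ t ∈ s.powerset, f t = f ∅ + ∑ t ∈ s.powerset.filter (·.Nonempty), f t := by
  classical
  have : s.powerset.filter (·.Nonempty) = s.powerset.erase ∅ := by
    ext t; simp [nonempty_iff_ne_empty, and_comm]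
  rw [this, add_sum_erase _ _ (empty_mem_powerset s)]

theorem sum_Ici_pow_mul_pow {α R : Type*} [Fintype α] [DecidableEq α] [CommSemiring R]
    (a b : R) (A : Finset α) :
    ∑ F ∈ Ici A, a ^ #F * b ^ (Fintype.card α - #F) =
      a ^ #A * (a + b) ^ (Fintype.card α - #A) := by
  have hdisj : ∀ K ∈ (univ \ A).powerset, Disjoint A K := fun K hK =>
    disjoint_of_subset_right (mem_powerset.1 hK) disjoint_sdiff
  have hinj : Set.InjOn (A ∪ ·) ((univ \ A).powerset : Set (Finset α)) := fun K hK L hL h => by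
    rw [← union_sdiff_cancel_left (hdisj K hK), ← union_sdiff_cancel_left (hdisj L hL)]
    exact congrArg (· \ A) h
  rw [Ici_eq_Icc, top_eq_univ, Icc_eq_image_powerset (subset_univ A), sum_image hinj,
    ← card_univ_sdiff, ← sum_pow_mul_eq_add_pow, mul_sum]
  refine sum_congr rfl fun K hK => ?_
  have hKA : #K ≤ #(univ \ A) := card_le_card (mem_powerset.1 hK)
  rw [card_union_of_disjoint (hdisj K hK), card_univ_sdiff, pow_add, mul_assoc]
  congr 3
  omega

theorem sum_facesOf {ι M : Type*} [Fintype ι] [AddCommGroup M] {N : ℕ}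
    (α : ι → Finset (Fin N)) (f : Finset (Fin N) → M) :
    ∑ F ∈ facesOf α, f F =
      ∑ I ∈ (univ : Finset ι).powerset, (-1 : ℤ) ^ #I • ∑ F ∈ Ici (unionOver α I), f F := by
  have hfaces : facesOf α = univ.inf fun i => (Ici (α i))ᶜ := by
    ext F; simp [facesOf, mem_inf]
  have hinf : ∀ I : Finset ι, I.inf (fun i => Ici (α i)) = Ici (unionOver α I) := by
    intro I; ext F; simp [mem_inf, unionOver_subset_iff]
  simp only [hfaces, inclusion_exclusion_sum_inf_compl, hinf]

section cone

variable {n : ℕ}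

/-- `s ∪ {n+1}`: `Fin n` sits in `Fin (n + 1)` via `castSucc`, and `n+1` is `Fin.last n`. -/
def cone (s : Finset (Fin n)) : Finset (Fin (n + 1)) :=
  insert (Fin.last n) (s.image Fin.castSucc)

theorem last_mem_cone (s : Finset (Fin n)) : Fin.last n ∈ cone s := mem_insert_self _ _

theorem card_cone (s : Finset (Fin n)) : #(cone s) = #s + 1 := by
  rw [cone, card_insert_of_notMem, card_image_of_injective _ (Fin.castSucc_injective n)]
  simp [Fin.castSucc_ne_last]

theorem cone_inter_cone (s t : Finset (Fin n)) : cone s ∩ cone t = cone (s ∩ t) := by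
  rw [cone, cone, cone, ← insert_inter_distrib, image_inter _ _ (Fin.castSucc_injective n)]

theorem unionOver_cone {ι : Type*} (α : ι → Finset (Fin n)) {I : Finset ι} (hI : I.Nonempty) :
    unionOver (fun i => cone (α i)) I = cone (unionOver α I) := by
  rw [cone, ← unionOver_image, ← unionOver_insert _ _ hI]
  rfl

theorem propertyI_cone {ι : Type*} (α : ι → Finset (Fin n)) :
    PropertyI (fun i => cone (α i)) α := by
  refine ⟨fun i => (card_cone _).symm, fun I hI p _ => ⟨fun h => ?_, fun _ => ?_⟩⟩
  · have : Fin.last n ∈ unionOver (fun i => cone (α i)) I ∩ cone (α p) := by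
      rw [unionOver_cone α hI]
      exact mem_inter.2 ⟨last_mem_cone _, last_mem_cone _⟩
    simp [h] at this
  · rw [unionOver_cone α hI, cone_inter_cone, card_cone]

theorem simpChrom_cone {ι : Type*} [Fintype ι] [DecidableEq ι] (α : ι → Finset (Fin n)) :
    simpChrom (fun i => cone (α i)) =
      T ((n : ℤ) + 1) *
        ∑ I ∈ (univ : Finset ι).powerset, (-1) ^ #I * T (-(#(unionOver α I) : ℤ)) := by
  rw [simpChrom, sum_powerset_eq_add_sum_nonempty, mul_add, mul_sum]
  congr 1
  · simp [unionOver_empty]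
  · refine sum_congr rfl fun I hI => ?_
    have hI := (mem_filter.1 hI).2
    have hc : compCount (fun i => cone (α i)) I = 1 := compCount_eq_one _ hI fun i _ j _ =>
      ⟨Fin.last n, mem_inter.2 ⟨last_mem_cone _, last_mem_cone _⟩⟩
    rw [hc, unionOver_cone α hI, card_cone, mul_left_comm, ← T_add]
    push_cast
    ring_nf

end cone

theorem stmt_9_general {n r : ℕ} (α : Fin r → Finset (Fin n))
    (σ : Fin r → Finset (Fin (n + 1)))
    (hσ : ∀ i, σ i = insert (Fin.last n) ((α i).image Fin.castSucc)) :
    PropertyI σ α ∧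
    simpChrom σ =
      T ((n : ℤ) + 1) *
        ∑ F ∈ facesOf α,
          T (-(F.card : ℤ)) * (1 - T (-1)) ^ (n - F.card) := by
  obtain rfl : σ = fun i => cone (α i) := funext hσ
  refine ⟨propertyI_cone α, ?_⟩
  have hT : ∀ k : ℕ, (T (-(k : ℤ)) : LaurentPolynomial ℤ) = T (-1) ^ k := fun k => by
    rw [T_pow]; ring_nf
  rw [simpChrom_cone, sum_facesOf]
  congr 1
  refine sum_congr rfl fun I _ => ?_
  have hsum := sum_Ici_pow_mul_pow (T (-1) : LaurentPolynomial ℤ) (1 - T (-1)) (unionOver α I)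
  simp only [Fintype.card_fin, add_sub_cancel, one_pow, mul_one, ← hT] at hsum
  rw [hsum, zsmul_eq_mul, Int.cast_pow, Int.cast_neg, Int.cast_one]

/-- every simplicial complex `T` (on `{1,…,n}`, with minimal nonfaces
`α_1, …, α_r`) is the auxiliary complex of a complex `S` on `{1,…,n+1}` whose minimal
nonfaces are `σ_i = α_i ∪ {n+1}`; `S` satisfies property I with witnesses the `α_i`,
`T(S) = T`, and `χ_c(S)(t) = t^{n+1} · Σ_{F ∈ T} t^{−|F|} (1 − t^{−1})^{n−|F|}`. -/
theorem stmt_9 {n r : ℕ} (α : Fin r → Finset (Fin n))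
    (hmin : ∀ i j, α i ⊆ α j → i = j)
    (σ : Fin r → Finset (Fin (n + 1)))
    (hσ : ∀ i, σ i = insert (Fin.last n) ((α i).image Fin.castSucc)) :
    PropertyI σ α ∧
    simpChrom σ =
      T ((n : ℤ) + 1) *
        ∑ F ∈ facesOf α,
          T (-(F.card : ℤ)) * (1 - T (-1)) ^ (n - F.card) :=
  stmt_9_general α σ hσ
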